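/- arXiv:2409.18670 — 5 statements merged into one kernel-verified Lean document; each statement's English description precedes it below -/
import Mathlib

section
/- Let C=(S,P) be a countable Markov chain, R ⊆ S a set such that from every state s the probability of eventually reaching R is positive, and L : S → ℝ≥0 a function such that (1) for every n ∈ ℕ the set L⁻¹([0,n]) is finite, and (2) for every s ∉ R, the expected value ∑_{s'} P(s,s')·L(s') ≤ L(s). Then from every state s, the probability of eventually reaching R equals 1 (i.e., R is an attractor). -/
open scoped ENNReal NNReal BigOperators
open Filter

noncomputable section

variable {S : Type*}

/-- Probability of following a finite path (list of successive states). -/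
def pathProb (P : S → S → ℝ≥0∞) : List S → ℝ≥0∞
  | [] => 1
  | [_] => 1
  | a :: b :: l => P a b * pathProb P (b :: l)

/-- `l` is a finite path starting at `s` that visits `T` for the first time
at its last element. -/
def FirstHitPath (T : Set S) (s : S) (l : List S) : Prop :=
  l.head? = some s ∧ ∃ h : l ≠ [], l.getLast h ∈ T ∧
    ∀ i : Fin l.length, (i : ℕ) + 1 < l.length → l.get i ∉ T

/-- Probability of eventually reaching `T` from `s`. -/
def reachProb (P : S → S → ℝ≥0∞) (T : Set S) (s : S) : ℝ≥0∞ :=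
  ∑' l : {l : List S // FirstHitPath T s l}, pathProb P (l : List S)

/-- The avoid set: states from which `T` is unreachable. -/
def Av (P : S → S → ℝ≥0∞) (T : Set S) : Set S := {s | reachProb P T s = 0}

/-- Probability that, starting from `s`, the chain stays outside `R`
during its first `n` steps (i.e. the hitting time of `R` is `> n`). -/
def surviveProb (P : S → S → ℝ≥0∞) (R : Set S) (s : S) (n : ℕ) : ℝ≥0∞ :=
  ∑' l : {l : List S // l.length = n + 1 ∧ l.head? = some s ∧ ∀ x ∈ l, x ∉ R},
    pathProb P (l : List S)

/-- Expected hitting time of `R` from `s`, via `E τ = ∑_{n≥0} Pr(τ > n)`. -/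
def expHittingTime (P : S → S → ℝ≥0∞) (R : Set S) (s : S) : ℝ≥0∞ :=
  ∑' n : ℕ, surviveProb P R s n

/-- Probability that `X_i ∈ A` for all `i ≥ m`, starting from `s`
(as the infimum over finite horizons). -/
def confineProb (P : S → S → ℝ≥0∞) (A : Set S) (s : S) (m : ℕ) : ℝ≥0∞ :=
  ⨅ n : ℕ, ∑' l : {l : List S // l.length = n + 1 ∧ l.head? = some s ∧
      ∀ i : Fin l.length, m ≤ (i : ℕ) → l.get i ∈ A}, pathProb P (l : List S)

/-- Expected reward collected at the first visit of `T`. -/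
def expReward (P : S → S → ℝ≥0∞) (L : List S → ℝ≥0∞) (T : Set S) (s : S) : ℝ≥0∞ :=
  ∑' l : {l : List S // FirstHitPath T s l}, L l * pathProb P (l : List S)

/-- `P` is a stochastic matrix. -/
def IsStochastic (P : S → S → ℝ≥0∞) : Prop := ∀ s, ∑' s', P s s' = 1

/-- States of the biased chain other than `s₋`. -/
abbrev SA (P : S → S → ℝ≥0∞) (F : Set S) := {s : S // s ∉ Av P F}

/-- `P'` (on `(S ∖ Av(F)) ⊎ {s₋}`, with `none = s₋`) is a biased Markov chain
of `(C, T, F)`. -/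
def IsBiased (P : S → S → ℝ≥0∞) (T F : Set S)
    (P' : Option (SA P F) → Option (SA P F) → ℝ≥0∞) : Prop :=
  IsStochastic P' ∧
  P' none none = 1 ∧
  (∀ s : SA P F, s.val ∈ T → P' (some s) (some s) = 1) ∧
  (∀ s s' : SA P F, 0 < P s.val s'.val → 0 < P' (some s) (some s'))

/-- `(C^•, F^•)` together with `α` is an abstraction of `(C, F)`. -/
def IsAbstraction (P : S → S → ℝ≥0∞) (F : Set S)
    {S' : Type*} (P' : S' → S' → ℝ≥0∞) (F' : Set S')
    (α : SA P F → S') : Prop :=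
  (∀ s : SA P F, s.val ∈ F → α s ∈ F') ∧
  (∀ s : SA P F, s.val ∉ F →
    ∑' s' : SA P F, P s.val s'.val * reachProb P' F' (α s')
      ≤ reachProb P' F' (α s))

/-- The decreasing ratio `h(s)` of an abstraction. -/
def hRatio (P : S → S → ℝ≥0∞) (F : Set S)
    {S' : Type*} (P' : S' → S' → ℝ≥0∞) (F' : Set S')
    (α : SA P F → S') (s : SA P F) : ℝ≥0∞ :=
  (∑' s' : SA P F, P s.val s'.val * reachProb P' F' (α s'))
    / reachProb P' F' (α s)

/-- The biased Markov chain constructed from an abstraction. -/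
def biasedKernel (P : S → S → ℝ≥0∞) (F : Set S)
    {S' : Type*} (P' : S' → S' → ℝ≥0∞) (F' : Set S')
    (α : SA P F → S') :
    Option (SA P F) → Option (SA P F) → ℝ≥0∞
  | none, none => 1
  | none, some _ => 0
  | some s, none => 1 - hRatio P F P' F' α s
  | some s, some s' =>
      P s.val s'.val * reachProb P' F' (α s') / reachProb P' F' (α s)

/-- The random walk `W^p` on `ℕ`: `0` absorbing, up with probability `p`,
down with probability `1 - p`. -/
def walkKernel (p : ℝ≥0∞) : ℕ → ℕ → ℝ≥0∞ := fun m n =>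
  if m = 0 then (if n = 0 then 1 else 0)
  else if n = m + 1 then p
  else if n + 1 = m then 1 - p
  else 0

/-- `(C, λ)` is a layered Markov chain. -/
def IsLMC (P : S → S → ℝ≥0∞) (lam : S → ℕ) : Prop :=
  (∀ s s', 0 < P s s' → (lam s : ℤ) ≤ (lam s' : ℤ) + 1) ∧
  (∀ n : ℕ, {s : S | lam s = n}.Finite)

/-- Total probability of increasing the level. -/
def Pup (P : S → S → ℝ≥0∞) (lam : S → ℕ) (s : S) : ℝ≥0∞ :=
  ∑' s' : {s' : S // lam s < lam s'}, P s s'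

/-- Total probability of decreasing the level (by one). -/
def Pdown (P : S → S → ℝ≥0∞) (lam : S → ℕ) (s : S) : ℝ≥0∞ :=
  ∑' s' : {s' : S // lam s' + 1 = lam s}, P s s'

/-- Total probability of keeping the same level. -/
def Peq (P : S → S → ℝ≥0∞) (lam : S → ℕ) (s : S) : ℝ≥0∞ :=
  ∑' s' : {s' : S // lam s' = lam s}, P s s'

/-- `(C, λ)` is `(p⁺, N₀)`-divergent. -/
def Divergent (P : S → S → ℝ≥0∞) (lam : S → ℕ) (pplus : ℝ≥0∞) (N₀ : ℕ) : Prop :=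
  1/2 < pplus ∧ ∀ s : S, N₀ < lam s → Peq P lam s < 1 →
    pplus ≤ Pup P lam s / (Pdown P lam s + Pup P lam s)

end

open scoped Classical

/-!
Let `q s = ⨅ n, stayProb P Rᶜ s n` be the probability of avoiding `R` forever; reaching `R`
has probability `1 - q s`. Fix `M ≥ 1` and the finite set `B = {t ∉ R | L t < M}`. Off `R`
the function `L / M` is a supermartingale, and it is `≥ 1` outside `B`, so the probability of
leaving `B` for a state outside `R` is at most `L s / M`. Staying in `B` forever has probability
zero: `B` is finite and every state has positive probability of reaching `R`, so within a uniform
number `N` of steps the chain leaves `B` with probability bounded away from zero, and the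
probability of staying in `B` for `k * N` steps decays geometrically. Hence `q s ≤ L s / M` for
every `M`, i.e. `q s = 0`.
-/

namespace ENNReal

variable {α : Type*}

theorem tsum_iUnion_eq_iSup_of_monotone (f : α → ℝ≥0∞) {s : ℕ → Set α} (hs : Monotone s) :
    ∑' x : ⋃ n, s n, f x = ⨆ n, ∑' x : s n, f x := by
  refine le_antisymm ?_ (iSup_le fun n => ENNReal.tsum_mono_subtype f (Set.subset_iUnion s n))
  rw [ENNReal.tsum_eq_iSup_sum]
  refine iSup_le fun F => ?_
  obtain ⟨n, hn⟩ := hs.directed_le.exists_mem_subset_of_finset_subset_biUnion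
    (s := F.map (Function.Embedding.subtype _)) fun a ha => by
      obtain ⟨x, -, rfl⟩ := Finset.mem_map.1 ha
      exact x.2
  calc ∑ x ∈ F, f x = ∑' x : (F.map (Function.Embedding.subtype _) : Set α), f x := by
        rw [Finset.tsum_subtype', Finset.sum_map]; rfl
    _ ≤ ∑' x : s n, f x := ENNReal.tsum_mono_subtype f hn
    _ ≤ ⨆ n, ∑' x : s n, f x := le_iSup (fun n => ∑' x : s n, f x) n

end ENNReal

section Paths

variable {S : Type*}

theorem pathProb_cons_of_head? (P : S → S → ℝ≥0∞) (s : S) {s' : S} {l : List S}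
    (h : l.head? = some s') : pathProb P (s :: l) = P s s' * pathProb P l := by
  cases l with
  | nil => simp at h
  | cons b t =>
    obtain rfl : b = s' := by simpa using h
    rfl

theorem tsum_pathProb_image_cons (P : S → S → ℝ≥0∞) (s : S) (paths : S → Set (List S))
    (hpaths : ∀ s', ∀ l ∈ paths s', l.head? = some s') :
    ∑' l : List.cons s '' ⋃ s', paths s', pathProb P l =
      ∑' s', P s s' * ∑' l : paths s', pathProb P l := by
  have hdisj : Set.univ.PairwiseDisjoint paths := fun a _ b _ hab =>
    Set.disjoint_left.2 fun l ha hb =>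
      hab (Option.some.inj ((hpaths a l ha).symm.trans (hpaths b l hb)))
  rw [tsum_image _ List.cons_injective.injOn,
    ENNReal.tsum_biUnion (f := fun l => pathProb P (s :: l)) hdisj]
  refine tsum_congr fun s' => ?_
  rw [← ENNReal.tsum_mul_left]
  exact tsum_congr fun l => pathProb_cons_of_head? P s (hpaths s' l l.2)

end Paths

section Stay

variable {S : Type*}

def stayPaths (A : Set S) (s : S) (n : ℕ) : Set (List S) :=
  {l | l.length = n + 1 ∧ l.head? = some s ∧ ∀ x ∈ l, x ∈ A}

noncomputable def stayProb (P : S → S → ℝ≥0∞) (A : Set S) (s : S) (n : ℕ) : ℝ≥0∞ :=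
  ∑' l : stayPaths A s n, pathProb P l

variable {A : Set S} {s : S}

theorem stayPaths_of_notMem (hs : s ∉ A) (n : ℕ) : stayPaths A s n = ∅ := by
  refine Set.eq_empty_of_forall_notMem fun l ⟨_, hhead, hA⟩ => hs (hA s ?_)
  exact List.mem_of_mem_head? hhead

theorem stayPaths_zero_of_mem (hs : s ∈ A) : stayPaths A s 0 = {[s]} := by
  ext l
  constructor
  · rintro ⟨hlen, hhead, -⟩
    obtain ⟨a, rfl⟩ := List.length_eq_one_iff.mp hlen
    simpa using hhead
  · rintro rfl
    simpa [stayPaths] using hs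

theorem stayPaths_succ_of_mem (hs : s ∈ A) (n : ℕ) :
    stayPaths A s (n + 1) = List.cons s '' ⋃ s', stayPaths A s' n := by
  ext l
  constructor
  · rintro ⟨hlen, hhead, hA⟩
    obtain ⟨a, t, rfl⟩ := List.exists_cons_of_ne_nil (List.ne_nil_of_length_eq_add_one hlen)
    obtain ⟨b, u, rfl⟩ := List.exists_cons_of_ne_nil
      (List.ne_nil_of_length_eq_add_one (Nat.succ_injective hlen))
    obtain rfl : a = s := by simpa using hhead
    exact ⟨b :: u, Set.mem_iUnion.2
      ⟨b, by simpa using hlen, rfl, fun x hx => hA x (List.mem_cons_of_mem _ hx)⟩, rfl⟩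
  · rintro ⟨t, ht, rfl⟩
    obtain ⟨s', hlen, -, hA⟩ := Set.mem_iUnion.1 ht
    exact ⟨by simp [hlen], rfl, by simpa using ⟨hs, hA⟩⟩

variable (P : S → S → ℝ≥0∞)

theorem stayProb_of_notMem (hs : s ∉ A) (n : ℕ) : stayProb P A s n = 0 := by
  rw [stayProb, stayPaths_of_notMem hs, tsum_empty]

theorem stayProb_zero_of_mem (hs : s ∈ A) : stayProb P A s 0 = 1 := by
  rw [stayProb, stayPaths_zero_of_mem hs, tsum_singleton]
  rfl

theorem stayProb_succ_of_mem (hs : s ∈ A) (n : ℕ) :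
    stayProb P A s (n + 1) = ∑' s', P s s' * stayProb P A s' n := by
  rw [stayProb, stayPaths_succ_of_mem hs, tsum_pathProb_image_cons]
  · rfl
  · exact fun s' l hl => hl.2.1

end Stay

section Stochastic

variable {S : Type*} {P : S → S → ℝ≥0∞}

theorem IsStochastic.tsum_mul_le_one (hP : IsStochastic P) (s : S) {f : S → ℝ≥0∞}
    (hf : ∀ s', f s' ≤ 1) : ∑' s', P s s' * f s' ≤ 1 :=
  calc ∑' s', P s s' * f s' ≤ ∑' s', P s s' * 1 :=
        ENNReal.tsum_le_tsum fun s' => mul_le_mul_right (hf s') _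
    _ = 1 := by simpa using hP s

variable {A : Set S}

theorem stayProb_le_one (hP : IsStochastic P) (s : S) (n : ℕ) : stayProb P A s n ≤ 1 := by
  induction n generalizing s with
  | zero =>
    by_cases hs : s ∈ A
    · rw [stayProb_zero_of_mem P hs]
    · simp [stayProb_of_notMem P hs]
  | succ n ih =>
    by_cases hs : s ∈ A
    · rw [stayProb_succ_of_mem P hs]
      exact hP.tsum_mul_le_one s ih
    · simp [stayProb_of_notMem P hs]

theorem stayProb_antitone (hP : IsStochastic P) (s : S) : Antitone (stayProb P A s) := by
  refine antitone_nat_of_succ_le fun n => ?_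
  induction n generalizing s with
  | zero =>
    by_cases hs : s ∈ A
    · rw [stayProb_zero_of_mem P hs, stayProb_succ_of_mem P hs]
      exact hP.tsum_mul_le_one s (stayProb_le_one hP · 0)
    · simp [stayProb_of_notMem P hs]
  | succ n ih =>
    by_cases hs : s ∈ A
    · rw [stayProb_succ_of_mem P hs, stayProb_succ_of_mem P hs]
      exact ENNReal.tsum_le_tsum fun s' => mul_le_mul_right (ih s') _
    · simp [stayProb_of_notMem P hs]

theorem stayProb_mono {B : Set S} (hAB : A ⊆ B) (s : S) (n : ℕ) :
    stayProb P A s n ≤ stayProb P B s n :=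
  ENNReal.tsum_mono_subtype _ fun _ ⟨hlen, hhead, hA⟩ =>
    ⟨hlen, hhead, fun x hx => hAB (hA x hx)⟩

section Decay

variable {N : ℕ} {ε : ℝ≥0∞}

theorem stayProb_add_le_mul (hN : ∀ u, stayProb P A u N ≤ ε) (m : ℕ) (s : S) :
    stayProb P A s (m + N) ≤ stayProb P A s m * ε := by
  induction m generalizing s with
  | zero => by_cases hs : s ∈ A <;> simp [stayProb_zero_of_mem, stayProb_of_notMem, hs, hN]
  | succ m ih =>
    by_cases hs : s ∈ A
    · rw [Nat.add_right_comm, stayProb_succ_of_mem P hs, stayProb_succ_of_mem P hs,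
        ← ENNReal.tsum_mul_right]
      exact ENNReal.tsum_le_tsum fun s' => by
        rw [mul_assoc]
        exact mul_le_mul_right (ih s') _
    · simp [stayProb_of_notMem P hs]

theorem stayProb_mul_le_pow (hP : IsStochastic P) (hN : ∀ u, stayProb P A u N ≤ ε) (k : ℕ)
    (s : S) : stayProb P A s (k * N) ≤ ε ^ k := by
  induction k generalizing s with
  | zero => simpa using stayProb_le_one hP s 0
  | succ k ih =>
    rw [Nat.succ_mul, pow_succ]
    exact (stayProb_add_le_mul hN _ s).trans (mul_le_mul_left (ih s) _)

theorem iInf_stayProb_eq_zero_of_le (hP : IsStochastic P) (hε : ε < 1)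
    (hN : ∀ u, stayProb P A u N ≤ ε) (s : S) : ⨅ n, stayProb P A s n = 0 :=
  le_antisymm (ge_of_tendsto' (ENNReal.tendsto_pow_atTop_nhds_zero_of_lt_one hε)
    fun k => (iInf_le _ _).trans (stayProb_mul_le_pow hP hN k s)) zero_le

end Decay

theorem iInf_stayProb_eq_zero_of_finite (hP : IsStochastic P) (hA : A.Finite)
    (hexit : ∀ u ∈ A, ∃ n, stayProb P A u n < 1) (s : S) : ⨅ n, stayProb P A s n = 0 := by
  obtain ⟨N, hN⟩ : ∃ N, ∀ u ∈ A, stayProb P A u N < 1 := by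
    have : ∀ᶠ n in atTop, ∀ u ∈ A, stayProb P A u n < 1 :=
      (Filter.eventually_all_finite hA).2 fun u hu => by
        obtain ⟨n, hn⟩ := hexit u hu
        exact Filter.eventually_atTop.2 ⟨n, fun m hm => (stayProb_antitone hP u hm).trans_lt hn⟩
    exact this.exists
  refine iInf_stayProb_eq_zero_of_le hP (N := N) (ε := hA.toFinset.sup (stayProb P A · N))
    ((Finset.sup_lt_iff zero_lt_one).2 fun u hu => hN u (hA.mem_toFinset.1 hu)) (fun u => ?_) s
  by_cases hu : u ∈ A
  · exact Finset.le_sup (f := (stayProb P A · N)) (hA.mem_toFinset.2 hu)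
  · simp [stayProb_of_notMem P hu]

theorem stayProb_le_add_of_drift (hP : IsStochastic P) {B : Set S} {f : S → ℝ≥0∞}
    (hdrift : ∀ s ∈ A, ∑' s', P s s' * f s' ≤ f s) (hf : ∀ s ∈ A \ B, 1 ≤ f s)
    (n : ℕ) (s : S) : stayProb P A s n ≤ stayProb P B s n + f s := by
  have hout : ∀ n s, s ∉ A ∩ B → stayProb P A s n ≤ stayProb P B s n + f s := by
    intro n s hs
    by_cases hsA : s ∈ A
    · exact (stayProb_le_one hP s n).trans
        ((hf s ⟨hsA, fun hsB => hs ⟨hsA, hsB⟩⟩).trans le_add_self)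
    · simp [stayProb_of_notMem P hsA]
  induction n generalizing s with
  | zero =>
    by_cases hs : s ∈ A ∩ B
    · simp [stayProb_zero_of_mem P hs.1, stayProb_zero_of_mem P hs.2]
    · exact hout 0 s hs
  | succ n ih =>
    by_cases hs : s ∈ A ∩ B
    swap
    · exact hout _ s hs
    rw [stayProb_succ_of_mem P hs.1, stayProb_succ_of_mem P hs.2]
    calc ∑' s', P s s' * stayProb P A s' n
        ≤ ∑' s', P s s' * (stayProb P B s' n + f s') :=
          ENNReal.tsum_le_tsum fun s' => by gcongr; exact ih s'
      _ = ∑' s', P s s' * stayProb P B s' n + ∑' s', P s s' * f s' := by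
          simp only [mul_add]
          exact ENNReal.tsum_add
      _ ≤ ∑' s', P s s' * stayProb P B s' n + f s := by gcongr; exact hdrift s hs.1

end Stochastic

section ReachWithin

variable {S : Type*} {T : Set S} {s : S}

theorem not_firstHitPath_nil : ¬ FirstHitPath T s [] := fun ⟨h, _⟩ => by simp at h

theorem firstHitPath_singleton_iff {a : S} : FirstHitPath T s [a] ↔ a = s ∧ s ∈ T := by
  constructor
  · rintro ⟨hhead, _, hlast, -⟩
    obtain rfl : a = s := by simpa using hhead
    exact ⟨rfl, by simpa using hlast⟩
  · rintro ⟨rfl, ha⟩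
    exact ⟨rfl, List.cons_ne_nil _ _, ha, fun i hi => by simp at hi⟩

theorem firstHitPath_cons_cons_iff {a b : S} {t : List S} :
    FirstHitPath T s (a :: b :: t) ↔ a = s ∧ s ∉ T ∧ FirstHitPath T b (b :: t) := by
  constructor
  · rintro ⟨hhead, _, hlast, hmid⟩
    obtain rfl : a = s := by simpa using hhead
    refine ⟨rfl, hmid 0 (by simp), rfl, List.cons_ne_nil _ _, by simpa using hlast,
      fun i hi => hmid i.succ (by simpa using hi)⟩
  · rintro ⟨rfl, ha, -, _, hlast, hmid⟩
    refine ⟨rfl, List.cons_ne_nil _ _, by simpa using hlast, Fin.cases (fun _ => ha) ?_⟩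
    exact fun i hi => hmid i (by simpa using hi)

theorem exists_firstHitPath_cons_iff {b : S} {t : List S} :
    (∃ a, FirstHitPath T a (b :: t)) ↔ FirstHitPath T b (b :: t) := by
  refine ⟨fun ⟨a, ha⟩ => ?_, fun h => ⟨b, h⟩⟩
  obtain rfl : b = a := by simpa using ha.1
  exact ha

def reachWithinPaths (T : Set S) (s : S) (n : ℕ) : Set (List S) :=
  {l | FirstHitPath T s l ∧ l.length ≤ n + 1}

noncomputable def reachWithinProb (P : S → S → ℝ≥0∞) (T : Set S) (s : S) (n : ℕ) : ℝ≥0∞ :=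
  ∑' l : reachWithinPaths T s n, pathProb P l

theorem reachWithinPaths_of_mem (hs : s ∈ T) (n : ℕ) : reachWithinPaths T s n = {[s]} := by
  ext l
  rcases l with _ | ⟨a, _ | ⟨b, t⟩⟩
  · simp [reachWithinPaths, not_firstHitPath_nil]
  · simp [reachWithinPaths, firstHitPath_singleton_iff, hs]
  · simp [reachWithinPaths, firstHitPath_cons_cons_iff, hs]

theorem reachWithinPaths_zero_of_notMem (hs : s ∉ T) : reachWithinPaths T s 0 = ∅ := by
  ext l
  rcases l with _ | ⟨a, _ | ⟨b, t⟩⟩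
  · simp [reachWithinPaths, not_firstHitPath_nil]
  · simp [reachWithinPaths, firstHitPath_singleton_iff, hs]
  · simp [reachWithinPaths]

theorem reachWithinPaths_succ_of_notMem (hs : s ∉ T) (n : ℕ) :
    reachWithinPaths T s (n + 1) = List.cons s '' ⋃ s', reachWithinPaths T s' n := by
  ext l
  rcases l with _ | ⟨a, _ | ⟨b, t⟩⟩
  · simp [reachWithinPaths, not_firstHitPath_nil]
  · simp [reachWithinPaths, firstHitPath_singleton_iff, hs, not_firstHitPath_nil]
  · simp [reachWithinPaths, firstHitPath_cons_cons_iff, hs, exists_firstHitPath_cons_iff]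
    tauto

variable (P : S → S → ℝ≥0∞)

theorem reachWithinProb_of_mem (hs : s ∈ T) (n : ℕ) : reachWithinProb P T s n = 1 := by
  rw [reachWithinProb, reachWithinPaths_of_mem hs, tsum_singleton]
  rfl

theorem reachWithinProb_zero_of_notMem (hs : s ∉ T) : reachWithinProb P T s 0 = 0 := by
  rw [reachWithinProb, reachWithinPaths_zero_of_notMem hs, tsum_empty]

theorem reachWithinProb_succ_of_notMem (hs : s ∉ T) (n : ℕ) :
    reachWithinProb P T s (n + 1) = ∑' s', P s s' * reachWithinProb P T s' n := by
  rw [reachWithinProb, reachWithinPaths_succ_of_notMem hs, tsum_pathProb_image_cons]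
  · rfl
  · exact fun s' l hl => hl.1.1

theorem reachProb_eq_iSup_reachWithinProb :
    reachProb P T s = ⨆ n, reachWithinProb P T s n := by
  have hunion : {l | FirstHitPath T s l} = ⋃ n, reachWithinPaths T s n :=
    Set.ext fun l => ⟨fun hl => Set.mem_iUnion.2 ⟨l.length, hl, by omega⟩, fun hl => by
      obtain ⟨_, hl, -⟩ := Set.mem_iUnion.1 hl
      exact hl⟩
  have hmono : Monotone (reachWithinPaths T s) := fun _ _ hmn _ hl =>
    ⟨hl.1, hl.2.trans (by omega)⟩
  calc reachProb P T s = ∑' l : ⋃ n, reachWithinPaths T s n, pathProb P l := by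
        rw [← hunion]
        rfl
    _ = ⨆ n, reachWithinProb P T s n := ENNReal.tsum_iUnion_eq_iSup_of_monotone _ hmono

variable {P}

theorem reachWithinProb_add_stayProb_compl (hP : IsStochastic P) (n : ℕ) (s : S) :
    reachWithinProb P T s n + stayProb P Tᶜ s n = 1 := by
  induction n generalizing s with
  | zero =>
    by_cases hs : s ∈ T
    · rw [reachWithinProb_of_mem P hs, stayProb_of_notMem P (Set.notMem_compl_iff.2 hs),
        add_zero]
    · rw [reachWithinProb_zero_of_notMem P hs, stayProb_zero_of_mem P hs, zero_add]
  | succ n ih =>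
    by_cases hs : s ∈ T
    · rw [reachWithinProb_of_mem P hs, stayProb_of_notMem P (Set.notMem_compl_iff.2 hs),
        add_zero]
    · rw [reachWithinProb_succ_of_notMem P hs, stayProb_succ_of_mem P hs, ← ENNReal.tsum_add]
      simpa [← mul_add, ih] using hP s

theorem reachProb_eq_one_sub_iInf_stayProb (hP : IsStochastic P) (s : S) :
    reachProb P T s = 1 - ⨅ n, stayProb P Tᶜ s n := by
  rw [reachProb_eq_iSup_reachWithinProb, ENNReal.sub_iInf]
  refine iSup_congr fun n => ENNReal.eq_sub_of_add_eq ?_ (reachWithinProb_add_stayProb_compl hP n s)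
  exact (stayProb_le_one hP s n |>.trans_lt ENNReal.one_lt_top).ne

end ReachWithin

section Attractor

variable {S : Type*} {P : S → S → ℝ≥0∞} {R : Set S}

theorem exists_stayProb_compl_lt_one (hP : IsStochastic P) {s : S} (h : 0 < reachProb P R s) :
    ∃ n, stayProb P Rᶜ s n < 1 := by
  rw [reachProb_eq_one_sub_iInf_stayProb hP] at h
  exact iInf_lt_iff.1 (tsub_pos_iff_lt.1 h)

theorem iInf_stayProb_compl_le_div (hP : IsStochastic P) (hreach : ∀ s, 0 < reachProb P R s)
    {L : S → ℝ≥0} (hfin : ∀ n : ℕ, {s : S | L s ≤ (n : ℝ≥0)}.Finite)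
    (hdrift : ∀ s ∉ R, ∑' s', P s s' * (L s' : ℝ≥0∞) ≤ (L s : ℝ≥0∞))
    {M : ℕ} (hM : M ≠ 0) (s : S) : ⨅ n, stayProb P Rᶜ s n ≤ L s / M := by
  set B := {t | t ∉ R ∧ L t < M}
  have hB : B.Finite := (hfin M).subset fun t ht => ht.2.le
  have hexit : ∀ u ∈ B, ∃ n, stayProb P B u n < 1 := fun u _ =>
    (exists_stayProb_compl_lt_one hP (hreach u)).imp fun n hn =>
      (stayProb_mono (fun t ht => ht.1) u n).trans_lt hn
  have hdriftM : ∀ t ∈ Rᶜ, ∑' t', P t t' * (L t' / M : ℝ≥0∞) ≤ L t / M := fun t ht => by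
    simp only [div_eq_mul_inv, ← mul_assoc, ENNReal.tsum_mul_right]
    gcongr
    exact hdrift t ht
  have hone : ∀ t ∈ Rᶜ \ B, 1 ≤ (L t / M : ℝ≥0∞) := fun t ⟨htR, htB⟩ => by
    have hLt : (M : ℝ≥0) ≤ L t := not_lt.1 fun h => htB ⟨htR, h⟩
    rw [ENNReal.le_div_iff_mul_le (.inl (by exact_mod_cast hM))
      (.inl (ENNReal.natCast_ne_top M)), one_mul]
    exact_mod_cast hLt
  calc ⨅ n, stayProb P Rᶜ s n ≤ ⨅ n, (stayProb P B s n + L s / M) :=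
        iInf_mono fun n => stayProb_le_add_of_drift hP hdriftM hone n s
    _ = (⨅ n, stayProb P B s n) + L s / M := ENNReal.iInf_add.symm
    _ = L s / M := by rw [iInf_stayProb_eq_zero_of_finite hP hB hexit s, zero_add]

end Attractor

section Thms

variable {S : Type*}

theorem stmt1_general (P : S → S → ℝ≥0∞) (hP : IsStochastic P)
    (R : Set S) (hreach : ∀ s, 0 < reachProb P R s)
    (L : S → ℝ≥0) (hfin : ∀ n : ℕ, {s : S | L s ≤ (n : ℝ≥0)}.Finite)
    (hdrift : ∀ s ∉ R, ∑' s', P s s' * (L s' : ℝ≥0∞) ≤ (L s : ℝ≥0∞)) :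
    ∀ s, reachProb P R s = 1 := by
  intro s
  have hlim : Tendsto (fun M : ℕ => (L s : ℝ≥0∞) / M) atTop (nhds 0) := by
    simpa only [div_eq_mul_inv, mul_zero] using
      ENNReal.Tendsto.const_mul ENNReal.tendsto_inv_nat_nhds_zero (.inr ENNReal.coe_ne_top)
  have hzero : ⨅ n, stayProb P Rᶜ s n = 0 :=
    nonpos_iff_eq_zero.1 <| ge_of_tendsto hlim <| eventually_atTop.2 ⟨1, fun _ hM =>
      iInf_stayProb_compl_le_div hP hreach hfin hdrift (Nat.one_le_iff_ne_zero.1 hM) s⟩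
  rw [reachProb_eq_one_sub_iInf_stayProb hP, hzero, tsub_zero]

theorem stmt1 [Countable S] (P : S → S → ℝ≥0∞) (hP : IsStochastic P)
    (R : Set S) (hreach : ∀ s, 0 < reachProb P R s)
    (L : S → ℝ≥0) (hfin : ∀ n : ℕ, {s : S | L s ≤ (n : ℝ≥0)}.Finite)
    (hdrift : ∀ s ∉ R, ∑' s', P s s' * (L s' : ℝ≥0∞) ≤ (L s : ℝ≥0∞)) :
    ∀ s, reachProb P R s = 1 :=
  stmt1_general P hP R hreach L hfin hdrift

end Thms
end

section
/- Let C=(S,P) be a countable Markov chain, R ⊆ S, and suppose there exist a function L : S → ℝ≥0 and ε > 0 such that for all s ∉ R, L(s) − ∑_{s'} P(s,s')·L(s') ≥ ε. Then for every s ∉ R, the expected hitting time of R starting from s is finite and bounded by L(s)/ε; in particular R is an attractor. -/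
open scoped ENNReal NNReal BigOperators
open Filter

open scoped Classical

/-!
Write `Pr_s(τ > n)` for `surviveProb P R s n`. Off `R`, one step of the chain gives
`Pr_s(τ > n + 1) = ∑ s', P s s' * Pr_{s'}(τ > n)`, so induction on `N` with the drift inequality
yields `ε * ∑_{n < N} Pr_s(τ > n) ≤ L s`, whence `E_s τ ≤ L s / ε < ∞`. A finite sum forces
`Pr_s(τ > n) → 0`. By the same recursion and stochasticity, `Pr_s(τ ≤ n) = 1 - Pr_s(τ > n)`,
and `Pr_s(τ ≤ n)` increases to the probability of ever reaching `R`, which is therefore `1`.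
-/

theorem ENNReal.tsum_iSup_of_monotone {α : Type*} {f : α → ℕ → ℝ≥0∞}
    (hf : ∀ a, Monotone (f a)) : ∑' a, ⨆ n, f a n = ⨆ n, ∑' a, f a n := by
  simp_rw [ENNReal.tsum_eq_iSup_sum, ENNReal.finsetSum_iSup_of_monotone hf]
  exact iSup_comm

section Paths

variable {S : Type*} (P : S → S → ℝ≥0∞)

theorem pathProb_cons_of_head?_eq {a b : S} {t : List S} (h : t.head? = some b) :
    pathProb P (a :: t) = P a b * pathProb P t := by
  cases t with
  | nil => simp at h
  | cons c r =>
    obtain rfl : c = b := Option.some_injective _ h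
    rfl

theorem tsum_pathProb_eq_tsum_mul (s : S) (p : S → List S → Prop)
    (hp : ∀ s' t, p s' t → t.head? = some s') (q : List S → Prop)
    (hq : ∀ l, q l ↔ ∃ s' t, p s' t ∧ l = s :: t) :
    ∑' l : {l // q l}, pathProb P l = ∑' s', P s s' * ∑' t : {t // p s' t}, pathProb P t := by
  let e : (Σ s', {t // p s' t}) → {l // q l} :=
    fun x => ⟨s :: x.2, (hq _).2 ⟨x.1, x.2, x.2.2, rfl⟩⟩
  have he : Function.Bijective e := by
    constructor
    · rintro ⟨a, t, ht⟩ ⟨a', t', ht'⟩ h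
      obtain rfl : t = t' := List.cons_injective (congrArg Subtype.val h)
      obtain rfl : a = a' := Option.some_injective _ ((hp _ _ ht).symm.trans (hp _ _ ht'))
      rfl
    · rintro ⟨l, hl⟩
      obtain ⟨a, t, ht, rfl⟩ := (hq l).1 hl
      exact ⟨⟨a, t, ht⟩, rfl⟩
  rw [← (Equiv.ofBijective e he).tsum_eq, ENNReal.tsum_sigma']
  refine tsum_congr fun s' => ?_
  rw [← ENNReal.tsum_mul_left]
  exact tsum_congr fun t => pathProb_cons_of_head?_eq P (hp _ _ t.2)

end Paths

section FirstHit

variable {S : Type*} {R : Set S} {s : S}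

theorem firstHitPath_singleton (hs : s ∈ R) : FirstHitPath R s [s] :=
  ⟨rfl, List.cons_ne_nil _ _, hs, fun i hi => absurd hi (by simp)⟩

theorem FirstHitPath.eq_singleton {l : List S} (hs : s ∈ R) (hl : FirstHitPath R s l) :
    l = [s] := by
  obtain ⟨hh, _, -, hmid⟩ := hl
  obtain ⟨t, rfl⟩ : ∃ t, l = s :: t := ⟨l.tail, (List.cons_head?_tail hh).symm⟩
  cases t with
  | nil => rfl
  | cons b r => exact absurd hs (by simpa using hmid ⟨0, by simp⟩ (by simp))

theorem firstHitPath_iff_cons (hs : s ∉ R) {l : List S} :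
    FirstHitPath R s l ↔ ∃ s' t, FirstHitPath R s' t ∧ l = s :: t := by
  constructor
  · rintro ⟨hh, _, hlast, hmid⟩
    obtain ⟨t, rfl⟩ : ∃ t, l = s :: t := ⟨l.tail, (List.cons_head?_tail hh).symm⟩
    have ht : t ≠ [] := by
      rintro rfl
      exact hs (by simpa using hlast)
    refine ⟨t.head ht, t, ⟨List.head?_eq_some_head ht, ht, ?_, fun j hj => ?_⟩, rfl⟩
    · rwa [← List.getLast_cons ht]
    · simpa using hmid ⟨j + 1, by simp⟩ (by simpa using hj)
  · rintro ⟨s', t, ⟨-, ht, hlast, hmid⟩, rfl⟩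
    refine ⟨rfl, List.cons_ne_nil _ _, by rwa [List.getLast_cons ht], ?_⟩
    rintro ⟨_ | j, hj⟩ hcond
    · simpa using hs
    · simpa using hmid ⟨j, by simpa using hj⟩ (by simpa using hcond)

end FirstHit

section HittingTimes

variable {S : Type*} (P : S → S → ℝ≥0∞) {R : Set S}

noncomputable def hitWithinProb (R : Set S) (s : S) (n : ℕ) : ℝ≥0∞ :=
  ∑' l : {l : List S // FirstHitPath R s l ∧ l.length ≤ n + 1}, pathProb P (l : List S)

theorem surviveProb_of_mem {s : S} (hs : s ∈ R) (n : ℕ) : surviveProb P R s n = 0 := by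
  have : IsEmpty {l : List S // l.length = n + 1 ∧ l.head? = some s ∧ ∀ x ∈ l, x ∉ R} :=
    ⟨fun ⟨_, _, hh, hav⟩ => hav s (List.mem_of_mem_head? hh) hs⟩
  exact tsum_empty

theorem surviveProb_zero {s : S} (hs : s ∉ R) : surviveProb P R s 0 = 1 := by
  refine (tsum_eq_single ⟨[s], rfl, rfl, by simpa using hs⟩ ?_).trans rfl
  rintro ⟨l, hl, hh, _⟩ hne
  obtain ⟨a, rfl⟩ := List.length_eq_one_iff.mp hl
  obtain rfl := Option.some_injective _ hh
  exact absurd rfl hne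

theorem surviveProb_succ {s : S} (hs : s ∉ R) (n : ℕ) :
    surviveProb P R s (n + 1) = ∑' s', P s s' * surviveProb P R s' n := by
  refine tsum_pathProb_eq_tsum_mul P s _ (fun _ _ h => h.2.1) _ fun l => ⟨?_, ?_⟩
  · rintro ⟨hlen, hh, hav⟩
    obtain ⟨t, rfl⟩ : ∃ t, l = s :: t := ⟨l.tail, (List.cons_head?_tail hh).symm⟩
    have ht : t ≠ [] := by rintro rfl; simp at hlen
    exact ⟨t.head ht, t, ⟨by simpa using hlen, List.head?_eq_some_head ht,
      fun x hx => hav x (List.mem_cons_of_mem _ hx)⟩, rfl⟩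
  · rintro ⟨s', t, ⟨hlen, -, hav⟩, rfl⟩
    exact ⟨by simp [hlen], rfl, by simpa [hs] using hav⟩

theorem hitWithinProb_of_mem {s : S} (hs : s ∈ R) (n : ℕ) : hitWithinProb P R s n = 1 := by
  refine (tsum_eq_single ⟨[s], firstHitPath_singleton hs, by simp⟩ ?_).trans rfl
  rintro ⟨l, hl, _⟩ hne
  exact absurd (Subtype.ext (hl.eq_singleton hs)) hne

theorem hitWithinProb_zero {s : S} (hs : s ∉ R) : hitWithinProb P R s 0 = 0 := by
  have : IsEmpty {l : List S // FirstHitPath R s l ∧ l.length ≤ 0 + 1} := by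
    refine ⟨fun ⟨l, hl, hlen⟩ => ?_⟩
    obtain ⟨s', t, ht, rfl⟩ := (firstHitPath_iff_cons hs).1 hl
    exact ht.2.1 (List.eq_nil_of_length_eq_zero (by simpa using hlen))
  exact tsum_empty

theorem hitWithinProb_succ {s : S} (hs : s ∉ R) (n : ℕ) :
    hitWithinProb P R s (n + 1) = ∑' s', P s s' * hitWithinProb P R s' n := by
  refine tsum_pathProb_eq_tsum_mul P s _ (fun _ _ h => h.1.1) _ fun l => ?_
  rw [firstHitPath_iff_cons hs]
  constructor
  · rintro ⟨⟨s', t, ht, rfl⟩, hlen⟩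
    exact ⟨s', t, ⟨ht, by simpa using hlen⟩, rfl⟩
  · rintro ⟨s', t, ⟨ht, hlen⟩, rfl⟩
    exact ⟨⟨s', t, ht, rfl⟩, by simpa using hlen⟩

theorem hitWithinProb_add_surviveProb (hP : IsStochastic P) (n : ℕ) (s : S) :
    hitWithinProb P R s n + surviveProb P R s n = 1 := by
  induction n generalizing s with
  | zero =>
    by_cases hs : s ∈ R
    · simp [hitWithinProb_of_mem P hs, surviveProb_of_mem P hs]
    · simp [hitWithinProb_zero P hs, surviveProb_zero P hs]
  | succ n ih =>
    by_cases hs : s ∈ R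
    · simp [hitWithinProb_of_mem P hs, surviveProb_of_mem P hs]
    · simp only [hitWithinProb_succ P hs, surviveProb_succ P hs, ← ENNReal.tsum_add, ← mul_add,
        ih, mul_one]
      exact hP s

theorem reachProb_eq_iSup_hitWithinProb (s : S) :
    reachProb P R s = ⨆ n, hitWithinProb P R s n := by
  have hunion : {l : List S | FirstHitPath R s l} =
      ⋃ n : ℕ, {l | FirstHitPath R s l ∧ l.length ≤ n + 1} := by
    ext l
    simpa using fun _ => ⟨l.length, Nat.le_succ _⟩
  calc reachProb P R s = ∑' l, {l | FirstHitPath R s l}.indicator (pathProb P) l :=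
        tsum_subtype _ _
    _ = ∑' l, ⨆ n : ℕ, {l | FirstHitPath R s l ∧ l.length ≤ n + 1}.indicator (pathProb P) l := by
        simp only [hunion, Set.indicator_iUnion_apply (M := ℝ≥0∞) rfl]
    _ = ⨆ n, ∑' l, {l | FirstHitPath R s l ∧ l.length ≤ n + 1}.indicator (pathProb P) l :=
        ENNReal.tsum_iSup_of_monotone fun l m n hmn => Set.indicator_le_indicator_of_subset
          (Set.ofPred_subset_ofPred.2 fun _ h => ⟨h.1, h.2.trans (by omega)⟩) (fun _ => zero_le) l
    _ = ⨆ n, hitWithinProb P R s n := iSup_congr fun n => (tsum_subtype _ _).symm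

theorem mul_sum_range_surviveProb_le (L : S → ℝ≥0∞) (ε : ℝ≥0∞)
    (hdrift : ∀ s ∉ R, ∑' s', P s s' * L s' + ε ≤ L s) (N : ℕ) (s : S) :
    ε * ∑ n ∈ Finset.range N, surviveProb P R s n ≤ L s := by
  induction N generalizing s with
  | zero => simp
  | succ N ih =>
    by_cases hs : s ∈ R
    · simp [surviveProb_of_mem P hs]
    have hsplit : ∑ n ∈ Finset.range (N + 1), surviveProb P R s n
        = 1 + ∑' s', P s s' * ∑ n ∈ Finset.range N, surviveProb P R s' n := by
      simp only [Finset.sum_range_succ', surviveProb_succ P hs, surviveProb_zero P hs,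
        Finset.mul_sum]
      rw [Summable.tsum_finsetSum fun _ _ => ENNReal.summable, add_comm]
    calc ε * ∑ n ∈ Finset.range (N + 1), surviveProb P R s n
        = ∑' s', P s s' * (ε * ∑ n ∈ Finset.range N, surviveProb P R s' n) + ε := by
          rw [hsplit, mul_add, mul_one, ← ENNReal.tsum_mul_left, add_comm]
          simp only [mul_left_comm]
      _ ≤ ∑' s', P s s' * L s' + ε := by gcongr with s'; exact ih s'
      _ ≤ L s := hdrift s hs

theorem mul_expHittingTime_le (L : S → ℝ≥0∞) (ε : ℝ≥0∞)
    (hdrift : ∀ s ∉ R, ∑' s', P s s' * L s' + ε ≤ L s) (s : S) :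
    ε * expHittingTime P R s ≤ L s := by
  rw [expHittingTime, ENNReal.tsum_eq_iSup_nat, ENNReal.mul_iSup]
  exact iSup_le fun N => mul_sum_range_surviveProb_le P L ε hdrift N s

theorem reachProb_eq_one_of_expHittingTime_ne_top (hP : IsStochastic P) {s : S}
    (h : expHittingTime P R s ≠ ⊤) : reachProb P R s = 1 := by
  have hsurvive : ⨅ n, surviveProb P R s n = 0 :=
    le_antisymm (ge_of_tendsto' (ENNReal.tendsto_atTop_zero_of_tsum_ne_top h)
      fun n => iInf_le _ n) bot_le
  have hhit : ∀ n, hitWithinProb P R s n = 1 - surviveProb P R s n := fun n =>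
    ENNReal.eq_sub_of_add_eq
      (ne_top_of_le_ne_top ENNReal.one_ne_top
        (le_add_self.trans (hitWithinProb_add_surviveProb P hP n s).le))
      (hitWithinProb_add_surviveProb P hP n s)
  rw [reachProb_eq_iSup_hitWithinProb, iSup_congr hhit, ← ENNReal.sub_iInf, hsurvive, tsub_zero]

end HittingTimes

section Thms

variable {S : Type*}

theorem stmt2_general (P : S → S → ℝ≥0∞) (hP : IsStochastic P)
    (R : Set S) (L : S → ℝ≥0) (ε : ℝ≥0) (hε : 0 < ε)
    (hdrift : ∀ s ∉ R, ∑' s', P s s' * (L s' : ℝ≥0∞) + (ε : ℝ≥0∞) ≤ (L s : ℝ≥0∞)) :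
    (∀ s ∉ R, expHittingTime P R s ≤ (L s : ℝ≥0∞) / (ε : ℝ≥0∞) ∧
      expHittingTime P R s < ⊤) ∧
    ∀ s, reachProb P R s = 1 := by
  have hε' : (ε : ℝ≥0∞) ≠ 0 := by exact_mod_cast hε.ne'
  have hbound : ∀ s, expHittingTime P R s ≤ L s / ε := fun s =>
    (ENNReal.le_div_iff_mul_le (Or.inl hε') (Or.inl ENNReal.coe_ne_top)).2
      (by rw [mul_comm]; exact mul_expHittingTime_le P _ _ hdrift s)
  have hfinite : ∀ s, expHittingTime P R s < ⊤ := fun s =>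
    (hbound s).trans_lt (ENNReal.div_lt_top ENNReal.coe_ne_top hε')
  exact ⟨fun s _ => ⟨hbound s, hfinite s⟩,
    fun s => reachProb_eq_one_of_expHittingTime_ne_top P hP (hfinite s).ne⟩

theorem stmt2 [Countable S] (P : S → S → ℝ≥0∞) (hP : IsStochastic P)
    (R : Set S) (L : S → ℝ≥0) (ε : ℝ≥0) (hε : 0 < ε)
    (hdrift : ∀ s ∉ R, ∑' s', P s s' * (L s' : ℝ≥0∞) + (ε : ℝ≥0∞) ≤ (L s : ℝ≥0∞)) :
    (∀ s ∉ R, expHittingTime P R s ≤ (L s : ℝ≥0∞) / (ε : ℝ≥0∞) ∧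
      expHittingTime P R s < ⊤) ∧
    ∀ s, reachProb P R s = 1 :=
  stmt2_general P hP R L ε hε hdrift

end Thms
end

section
/- Let C=(S,P) be a countable Markov chain with target T ⊆ F ⊆ S (T absorbing), C' a biased Markov chain of (C,T,F), and γ the likelihood function (γ(ρ) = Pr_C(ρ)/Pr_{C'}(ρ) for paths avoiding s₋, and 0 otherwise). For a computable nonnegative reward function L on finite paths, set L' = L·γ. Then the expected reward E(f_{L',T}(ϱ^{C',s₀})) in C' equals the expected reward E(f_{L,T}(ϱ^{C,s₀})) in C, for any s₀ ∉ Av_C(F). -/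
/-! A path of the biased chain that visits `s₋` has weight `0`; every other path is the image
under `some` of a path of `C` through `S ∖ Av(F)`, and on it `L' · Pr_{C'} = L · Pr_C`, because the
biased chain keeps every positive transition of `C`, so `Pr_{C'} ≠ 0` wherever `Pr_C ≠ 0`.
Conversely a path of `C` that first hits `T` with positive probability never enters `Av(F)`:
each of its states reaches its last state, which lies in `T ⊆ F`. Hence both expected rewards are
the same sum over paths of `C` in `S ∖ Av(F)`. -/

open scoped ENNReal NNReal BigOperators
open Filter

open scoped Classical

section Paths

variable {α β : Type*}

theorem IsStochastic.apply_le_one {P : α → α → ℝ≥0∞} (hP : IsStochastic P) (a b : α) :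
    P a b ≤ 1 :=
  hP a ▸ ENNReal.le_tsum b

theorem pathProb_ne_top {P : α → α → ℝ≥0∞} (hP : ∀ a b, P a b ≠ ⊤) :
    ∀ l : List α, pathProb P l ≠ ⊤
  | [] | [_] => ENNReal.one_ne_top
  | a :: b :: l => ENNReal.mul_ne_top (hP a b) (pathProb_ne_top hP (b :: l))

theorem pathProb_ne_zero_of_ne_zero {P Q : α → α → ℝ≥0∞}
    (h : ∀ a b, P a b ≠ 0 → Q a b ≠ 0) : ∀ l : List α, pathProb P l ≠ 0 → pathProb Q l ≠ 0
  | [] | [_] => fun _ => one_ne_zero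
  | a :: b :: l => by
      simp only [pathProb, mul_ne_zero_iff]
      exact fun ⟨hab, hl⟩ => ⟨h a b hab, pathProb_ne_zero_of_ne_zero h (b :: l) hl⟩

theorem pathProb_map (P : β → β → ℝ≥0∞) (φ : α → β) :
    ∀ l : List α, pathProb P (l.map φ) = pathProb (fun a b => P (φ a) (φ b)) l
  | [] | [_] => rfl
  | a :: b :: l => congrArg (P (φ a) (φ b) * ·) (pathProb_map P φ (b :: l))

theorem pathProb_append_cons (P : α → α → ℝ≥0∞) :
    ∀ (m : List α) (x : α) (t : List α),
      pathProb P (m ++ x :: t) = pathProb P (m ++ [x]) * pathProb P (x :: t)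
  | [], _, _ => (one_mul _).symm
  | [_], _, _ => by simp [pathProb]
  | a :: b :: m, x, t => by
      simp only [List.cons_append, pathProb]
      rw [← List.cons_append, pathProb_append_cons P (b :: m) x t, List.cons_append, mul_assoc]

theorem firstHitPath_append_singleton_iff {U : Set α} {s x : α} {m : List α} :
    FirstHitPath U s (m ++ [x]) ↔ (m ++ [x]).head? = some s ∧ x ∈ U ∧ ∀ y ∈ m, y ∉ U := by
  simp only [FirstHitPath, List.getLast_append_singleton, ne_eq,
    List.append_ne_nil_of_right_ne_nil, List.cons_ne_nil, not_false_eq_true, exists_const,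
    List.forall_mem_iff_getElem, Fin.forall_iff]
  refine and_congr_right' (and_congr_right' ⟨fun h i hi => ?_, fun h i hi hi' => ?_⟩)
  · simpa [List.getElem_append_left hi] using h i (by simp; omega) (by simp; omega)
  · have him : i < m.length := by simpa using hi'
    simpa [List.getElem_append_left him] using h i him

theorem firstHitPath_map {φ : α → β} (hφ : Function.Injective φ) {U : Set β} {s : α}
    {l : List α} : FirstHitPath U (φ s) (l.map φ) ↔ FirstHitPath (φ ⁻¹' U) s l := by
  rcases List.eq_nil_or_concat' l with rfl | ⟨m, x, rfl⟩
  · simp [FirstHitPath]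
  · rw [List.map_append, List.map_singleton, firstHitPath_append_singleton_iff,
      firstHitPath_append_singleton_iff, ← List.map_singleton, ← List.map_append, List.head?_map]
    simp [hφ.eq_iff]

theorem reachProb_ne_zero_of_mem {P : α → α → ℝ≥0∞} {U : Set α} {s : α} {l : List α}
    (hs : l.head? = some s) (hU : ∃ x ∈ l, x ∈ U) (hl : pathProb P l ≠ 0) :
    reachProb P U s ≠ 0 := by
  obtain ⟨x, hx⟩ : ∃ x, l.find? (· ∈ U) = some x :=
    Option.isSome_iff_exists.1 (List.find?_isSome.2 (by simpa using hU))
  obtain ⟨hxU, m, t, rfl, hm⟩ := List.find?_eq_some_iff_append.1 hx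
  have hfirst : FirstHitPath U s (m ++ [x]) :=
    firstHitPath_append_singleton_iff.2
      ⟨by cases m <;> simpa using hs, by simpa using hxU, by simpa using hm⟩
  rw [pathProb_append_cons] at hl
  exact fun h => left_ne_zero_of_mul hl (ENNReal.tsum_eq_zero.1 h ⟨_, hfirst⟩)

theorem FirstHitPath.notMem_Av {P : α → α → ℝ≥0∞} {T F : Set α} (hTF : T ⊆ F) {s : α}
    {l : List α} (hl : FirstHitPath T s l) (hP : pathProb P l ≠ 0) {x : α} (hx : x ∈ l) :
    x ∉ Av P F := by
  obtain ⟨m, t, rfl⟩ := List.append_of_mem hx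
  obtain ⟨-, hne, hlast, -⟩ := hl
  rw [List.getLast_append_of_ne_nil _ (List.cons_ne_nil x t)] at hlast
  rw [pathProb_append_cons] at hP
  exact reachProb_ne_zero_of_mem rfl ⟨_, List.getLast_mem _, hTF hlast⟩ (right_ne_zero_of_mul hP)

theorem tsum_subtype_list_eq_tsum_map {M : Type*} [AddCommMonoid M] [TopologicalSpace M]
    {φ : α → β} (hφ : Function.Injective φ) (p : List β → Prop) (f : List β → M)
    (hf : ∀ l, p l → f l ≠ 0 → ∀ x ∈ l, x ∈ Set.range φ) :
    ∑' l : {l // p l}, f l = ∑' m : {m : List α // p (m.map φ)}, f ((m : List α).map φ) := by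
  refine tsum_eq_tsum_of_ne_zero_bij (fun m => ⟨m.1.1.map φ, m.1.2⟩) ?_ ?_ fun _ => rfl
  · rintro ⟨⟨m, _⟩, _⟩ ⟨⟨m', _⟩, _⟩ h
    have : m = m' := List.map_injective_iff.2 hφ (congrArg Subtype.val h)
    subst this
    rfl
  · rintro ⟨l, hl⟩ hfl
    obtain ⟨m, rfl⟩ : l ∈ Set.range (List.map φ) := Set.range_list_map φ ▸ hf l hl hfl
    exact ⟨⟨⟨m, hl⟩, hfl⟩, rfl⟩

theorem expReward_eq_tsum_map {φ : α → β} (hφ : Function.Injective φ)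
    (P : β → β → ℝ≥0∞) (L : List β → ℝ≥0∞) (T : Set β) (s : β)
    (hL : ∀ l, FirstHitPath T s l → L l * pathProb P l ≠ 0 → ∀ x ∈ l, x ∈ Set.range φ) :
    expReward P L T s = ∑' m : {m : List α // FirstHitPath T s (m.map φ)},
      L ((m : List α).map φ) * pathProb P ((m : List α).map φ) :=
  tsum_subtype_list_eq_tsum_map hφ _ (fun l => L l * pathProb P l) hL

theorem List.reduceOption_map_some (l : List α) : (l.map some).reduceOption = l := by
  simp [List.reduceOption, List.filterMap_map]

end Paths

section Biased

variable {S : Type*} {P : S → S → ℝ≥0∞} {T F : Set S}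
  {P' : Option (SA P F) → Option (SA P F) → ℝ≥0∞}

theorem firstHitPath_map_some_iff (s₀ : SA P F) (m : List (SA P F)) :
    FirstHitPath {x : Option (SA P F) | ∃ s : SA P F, x = some s ∧ s.val ∈ T} (some s₀)
        (m.map some) ↔ FirstHitPath T s₀.val (m.map Subtype.val) := by
  rw [firstHitPath_map (Option.some_injective _), firstHitPath_map Subtype.val_injective]
  congr!
  ext x
  exact ⟨fun ⟨s, hs, hsT⟩ => Option.some_injective _ hs ▸ hsT, fun h => ⟨x, rfl, h⟩⟩

theorem IsBiased.pathProb_ne_top (hb : IsBiased P T F P') (l : List (Option (SA P F))) :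
    pathProb P' l ≠ ⊤ :=
  _root_.pathProb_ne_top
    (fun a b => ne_top_of_le_ne_top ENNReal.one_ne_top (hb.1.apply_le_one a b)) l

theorem IsBiased.pathProb_map_some_ne_zero (hb : IsBiased P T F P') {m : List (SA P F)}
    (hm : pathProb P (m.map Subtype.val) ≠ 0) : pathProb P' (m.map some) ≠ 0 := by
  rw [pathProb_map] at hm ⊢
  exact pathProb_ne_zero_of_ne_zero (fun a b h => (hb.2.2.2 a b (pos_iff_ne_zero.2 h)).ne') m hm

theorem IsBiased.likelihood_mul_pathProb (hb : IsBiased P T F P') (L : List S → ℝ≥0∞)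
    (m : List (SA P F)) :
    L (m.map Subtype.val) * (pathProb P (m.map Subtype.val) / pathProb P' (m.map some)) *
        pathProb P' (m.map some) = L (m.map Subtype.val) * pathProb P (m.map Subtype.val) := by
  by_cases hm : pathProb P (m.map Subtype.val) = 0
  · simp only [hm, ENNReal.zero_div, mul_zero, zero_mul]
  · rw [mul_assoc,
      ENNReal.div_mul_cancel (hb.pathProb_map_some_ne_zero hm) (hb.pathProb_ne_top _)]

end Biased

section Thms

variable {S : Type*}

theorem stmt6_general (P : S → S → ℝ≥0∞)
    (T F : Set S) (hTF : T ⊆ F)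
    (P' : Option (SA P F) → Option (SA P F) → ℝ≥0∞)
    (hb : IsBiased P T F P')
    (L : List S → ℝ≥0∞) (s₀ : SA P F) :
    expReward P'
      (fun l => if none ∈ l then 0 else
        L (l.reduceOption.map Subtype.val) *
          (pathProb P (l.reduceOption.map Subtype.val) / pathProb P' l))
      {x : Option (SA P F) | ∃ s : SA P F, x = some s ∧ s.val ∈ T}
      (some s₀)
    = expReward P L T s₀.val := by
  let reward (m : List (SA P F)) := L (m.map Subtype.val) * pathProb P (m.map Subtype.val)
  calc _ = ∑' m : {m : List (SA P F) // FirstHitPath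
          {x | ∃ s : SA P F, x = some s ∧ s.val ∈ T} (some s₀) (m.map some)}, reward m := by
        rw [expReward_eq_tsum_map (Option.some_injective _)]
        · refine tsum_congr fun m => ?_
          rw [if_neg (by simp), List.reduceOption_map_some, hb.likelihood_mul_pathProb]
        · rintro l - hl (_ | a) hx
          · simp [hx] at hl
          · exact ⟨a, rfl⟩
    _ = ∑' m : {m : List (SA P F) // FirstHitPath T s₀.val (m.map Subtype.val)}, reward m :=
      (Equiv.subtypeEquivRight (firstHitPath_map_some_iff s₀)).tsum_eq fun m => reward m
    _ = expReward P L T s₀.val := by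
      rw [expReward_eq_tsum_map Subtype.val_injective]
      rintro l hl hfl x hx
      exact ⟨⟨x, hl.notMem_Av hTF (right_ne_zero_of_mul hfl) hx⟩, rfl⟩

theorem stmt6 [Countable S] (P : S → S → ℝ≥0∞) (hP : IsStochastic P)
    (T F : Set S) (hTF : T ⊆ F) (habsT : ∀ s ∈ T, P s s = 1)
    (P' : Option (SA P F) → Option (SA P F) → ℝ≥0∞)
    (hb : IsBiased P T F P')
    (L : List S → ℝ≥0∞) (s₀ : SA P F) :
    expReward P'
      (fun l => if none ∈ l then 0 else
        L (l.reduceOption.map Subtype.val) *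
          (pathProb P (l.reduceOption.map Subtype.val) / pathProb P' l))
      {x : Option (SA P F) | ∃ s : SA P F, x = some s ∧ s.val ∈ T}
      (some s₀)
    = expReward P L T s₀.val :=
  stmt6_general P T F hTF P' hb L s₀

end Thms
end

section
/- Let (C^•, F^•) be an α-abstraction of (C, F), i.e., α : S ∖ Av_C(F) → S^• satisfies (A) α(s) ∈ F^• for all s ∈ F, and (B) for all s ∈ S ∖ (F ∪ Av_C(F)), ∑_{s' ∉ Av_C(F)} P(s,s')·μ^•(α(s')) ≤ μ^•(α(s)), where μ^•(x) is the probability of reaching F^• from x in C^•. Then for every s ∈ S ∖ Av_C(F), the probability μ_F(s) of reaching F from s in C satisfies μ_F(s) ≤ μ^•(α(s)); in particular μ^•(α(s)) > 0. -/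
/-!
Reachability is the supremum of its truncations `reachProbWithin n` (first-hit paths of length
at most `n`). By a first-step decomposition and induction on `n`, every truncation is dominated
by any function on `S ∖ Av(F)` that is `≥ 1` on `F` and superharmonic off `F`; states of `Av(F)`
contribute nothing, since even their untruncated reachability vanishes. Conditions (A) and (B)
say exactly that `μ^• ∘ α` is such a function. Positivity follows because `μ_F > 0` off `Av(F)`.
-/

open scoped ENNReal NNReal BigOperators
open Filter

open scoped Classical

section Thms

variable {S : Type*}

/-- Paths are lists of states, so length `≤ n` means reaching `T` within `n - 1` steps. -/
noncomputable def reachProbWithin (P : S → S → ℝ≥0∞) (T : Set S) (n : ℕ) (s : S) : ℝ≥0∞ :=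
  ∑' l : List S, if FirstHitPath T s l ∧ l.length ≤ n then pathProb P l else 0

variable {P : S → S → ℝ≥0∞} {T : Set S}

lemma reachProb_eq_tsum_ite (s : S) :
    reachProb P T s = ∑' l : List S, if FirstHitPath T s l then pathProb P l else 0 := by
  refine (tsum_subtype {l | FirstHitPath T s l} (pathProb P)).trans (tsum_congr fun l => ?_)
  simp only [Set.indicator, Set.mem_ofPred_eq]

lemma firstHitPath_iff_of_mem {x : S} (hx : x ∈ T) {l : List S} :
    FirstHitPath T x l ↔ l = [x] := by
  constructor
  · rintro ⟨hhead, hne, -, hfirst⟩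
    obtain ⟨a, t, rfl⟩ := List.exists_cons_of_ne_nil hne
    obtain rfl : a = x := by simpa using hhead
    cases t with
    | nil => rfl
    | cons b u => exact absurd hx (by simpa using hfirst ⟨0, by simp⟩ (by simp))
  · rintro rfl
    exact ⟨rfl, List.cons_ne_nil _ _, by simpa using hx, fun i hi => by simp at hi⟩

lemma reachProb_of_mem (P : S → S → ℝ≥0∞) {x : S} (hx : x ∈ T) : reachProb P T x = 1 := by
  simp_rw [reachProb_eq_tsum_ite, firstHitPath_iff_of_mem hx]
  rw [tsum_ite_eq]
  rfl

lemma reachProbWithin_le_reachProb (n : ℕ) (s : S) :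
    reachProbWithin P T n s ≤ reachProb P T s := by
  rw [reachProb_eq_tsum_ite, reachProbWithin]
  refine ENNReal.tsum_le_tsum fun l => ?_
  by_cases h : FirstHitPath T s l ∧ l.length ≤ n
  · rw [if_pos h, if_pos h.1]
  · rw [if_neg h]; exact zero_le

lemma reachProbWithin_zero (s : S) : reachProbWithin P T 0 s = 0 := by
  refine ENNReal.tsum_eq_zero.mpr fun l => if_neg ?_
  rintro ⟨⟨-, hne, -⟩, hlen⟩
  exact hne (List.length_eq_zero_iff.mp (Nat.le_zero.mp hlen))

lemma reachProb_le_of_forall_reachProbWithin_le {s : S} {C : ℝ≥0∞}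
    (h : ∀ n, reachProbWithin P T n s ≤ C) : reachProb P T s ≤ C := by
  rw [reachProb_eq_tsum_ite, ENNReal.tsum_eq_iSup_sum]
  refine iSup_le fun A => ?_
  calc (∑ l ∈ A, if FirstHitPath T s l then pathProb P l else 0)
      ≤ ∑ l ∈ A, if FirstHitPath T s l ∧ l.length ≤ A.sup List.length
          then pathProb P l else 0 := by
        refine Finset.sum_le_sum fun l hl => ?_
        by_cases hf : FirstHitPath T s l
        · rw [if_pos hf, if_pos ⟨hf, Finset.le_sup hl⟩]
        · rw [if_neg hf]; exact zero_le
    _ ≤ reachProbWithin P T (A.sup List.length) s := ENNReal.sum_le_tsum A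
    _ ≤ C := h _

lemma exists_eq_cons_cons_of_firstHitPath {s : S} (hs : s ∉ T) {l : List S}
    (h : FirstHitPath T s l) : ∃ s' rest, l = s :: s' :: rest := by
  obtain ⟨hhead, hne, hlast, -⟩ := h
  obtain ⟨a, t, rfl⟩ := List.exists_cons_of_ne_nil hne
  obtain rfl : a = s := by simpa using hhead
  cases t with
  | nil => exact absurd (by simpa using hlast) hs
  | cons s' rest => exact ⟨s', rest, rfl⟩

lemma FirstHitPath.of_cons {s s' : S} {rest : List S}
    (h : FirstHitPath T s (s :: s' :: rest)) : FirstHitPath T s' (s' :: rest) := by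
  obtain ⟨-, _, hlast, hfirst⟩ := h
  refine ⟨rfl, List.cons_ne_nil _ _, ?_, fun i hi => ?_⟩
  · rwa [List.getLast_cons (List.cons_ne_nil _ _)] at hlast
  · simpa using hfirst ⟨i + 1, Nat.succ_lt_succ i.isLt⟩ (Nat.succ_lt_succ hi)

lemma ite_firstHitPath_cons_le {s : S} (hs : s ∉ T) (n : ℕ) (l : List S) :
    (if FirstHitPath T s (s :: l) ∧ (s :: l).length ≤ n + 1 then pathProb P (s :: l) else 0)
      ≤ ∑' s', P s s' * if FirstHitPath T s' l ∧ l.length ≤ n then pathProb P l else 0 := by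
  split_ifs with h
  · obtain ⟨hpath, hlen⟩ := h
    obtain ⟨s', rest, hl⟩ := exists_eq_cons_cons_of_firstHitPath hs hpath
    obtain rfl := List.cons_injective hl
    calc pathProb P (s :: s' :: rest) = P s s' * pathProb P (s' :: rest) := rfl
      _ = P s s' * if FirstHitPath T s' (s' :: rest) ∧ (s' :: rest).length ≤ n
            then pathProb P (s' :: rest) else 0 := by
          rw [if_pos ⟨hpath.of_cons, by simpa using hlen⟩]
      _ ≤ _ := ENNReal.le_tsum s'
  · exact zero_le

lemma reachProbWithin_succ_le {s : S} (hs : s ∉ T) (n : ℕ) :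
    reachProbWithin P T (n + 1) s ≤ ∑' s', P s s' * reachProbWithin P T n s' := by
  have hsupport : Function.support (fun l : List S =>
      if FirstHitPath T s l ∧ l.length ≤ n + 1 then pathProb P l else 0) ⊆
      Set.range (List.cons s) := by
    intro l hl
    have h : FirstHitPath T s l := by
      by_contra h
      exact hl (if_neg fun hc => h hc.1)
    obtain ⟨s', rest, rfl⟩ := exists_eq_cons_cons_of_firstHitPath hs h
    exact ⟨_, rfl⟩
  rw [reachProbWithin, ← List.cons_injective.tsum_eq hsupport]
  calc _ ≤ ∑' l, ∑' s', P s s' * if FirstHitPath T s' l ∧ l.length ≤ n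
          then pathProb P l else 0 := ENNReal.tsum_le_tsum (ite_firstHitPath_cons_le hs n)
    _ = _ := by
        rw [ENNReal.tsum_comm]
        exact tsum_congr fun s' => ENNReal.tsum_mul_left

lemma tsum_mul_reachProbWithin_eq_tsum_subtype (s : S) (n : ℕ) :
    ∑' s', P s s' * reachProbWithin P T n s' =
      ∑' s' : SA P T, P s s' * reachProbWithin P T n s' := by
  refine (tsum_subtype_eq_of_support_subset (s := {s' | s' ∉ Av P T}) fun s' hs' hAv => ?_).symm
  refine Function.mem_support.mp hs' ?_
  rw [le_antisymm ((reachProbWithin_le_reachProb n s').trans_eq hAv) zero_le, mul_zero]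

theorem reachProb_le_of_superharmonic (g : SA P T → ℝ≥0∞)
    (hT : ∀ s : SA P T, s.val ∈ T → 1 ≤ g s)
    (hstep : ∀ s : SA P T, s.val ∉ T → ∑' s' : SA P T, P s s' * g s' ≤ g s)
    (s : SA P T) : reachProb P T s ≤ g s := by
  suffices h : ∀ n (t : SA P T), reachProbWithin P T n t ≤ g t from
    reachProb_le_of_forall_reachProbWithin_le (h · s)
  intro n
  induction n with
  | zero => intro t; rw [reachProbWithin_zero]; exact zero_le
  | succ n ih =>
    intro t
    by_cases htT : t.val ∈ T
    · exact (reachProbWithin_le_reachProb _ _).trans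
        ((reachProb_of_mem P htT).trans_le (hT t htT))
    · calc reachProbWithin P T (n + 1) t
          ≤ ∑' s', P t s' * reachProbWithin P T n s' := reachProbWithin_succ_le htT n
        _ = ∑' s' : SA P T, P t s' * reachProbWithin P T n s' :=
            tsum_mul_reachProbWithin_eq_tsum_subtype _ n
        _ ≤ ∑' s' : SA P T, P t s' * g s' :=
            ENNReal.tsum_le_tsum fun s' => mul_le_mul_right (ih s') _
        _ ≤ g t := hstep t htT

theorem stmt7_general (P : S → S → ℝ≥0∞)
    (F : Set S) {S' : Type*}
    (P' : S' → S' → ℝ≥0∞) (F' : Set S')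
    (α : SA P F → S') (habs : IsAbstraction P F P' F' α) :
    ∀ s : SA P F, reachProb P F s.val ≤ reachProb P' F' (α s) ∧
      0 < reachProb P' F' (α s) := by
  intro s
  have hle : reachProb P F s ≤ reachProb P' F' (α s) :=
    reachProb_le_of_superharmonic (fun t => reachProb P' F' (α t))
      (fun t ht => (reachProb_of_mem P' (habs.1 t ht)).ge) habs.2 s
  exact ⟨hle, (pos_iff_ne_zero.mpr s.2).trans_le hle⟩

theorem stmt7 [Countable S] (P : S → S → ℝ≥0∞) (hP : IsStochastic P)
    (F : Set S) {S' : Type*} [Countable S']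
    (P' : S' → S' → ℝ≥0∞) (hP' : IsStochastic P') (F' : Set S')
    (α : SA P F → S') (habs : IsAbstraction P F P' F' α) :
    ∀ s : SA P F, reachProb P F s.val ≤ reachProb P' F' (α s) ∧
      0 < reachProb P' F' (α s) :=
  stmt7_general P F P' F' α habs

end Thms
end

section
/- With C' the biased Markov chain of an abstraction (C,F) →^α (C^•,F^•), for every state s ∈ S ∖ Av_C(F) and every absorbing T ⊆ F: the reachability probability of T from s in C equals μ^•(α(s)) times the reachability probability of T from s in C'; similarly for F in place of T. -/
open scoped ENNReal NNReal BigOperators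
open Filter

/-! With `g u = μ^•(α u)`, the biased kernel restricted to `S ∖ Av(F)` is the Doob transform
`P(u,v) g(v) / g(u)` of `P`, so along a path the factors telescope: the `C`-probability of a
path times `g` of its last state is `g` of its first state times its `C'`-probability. A path
first hitting `T ⊆ F` ends where `g = 1`. In `C` such a path of positive probability never
enters `Av(F)`, and in `C'` it never enters the absorbing `s₋`, so summing over these paths
gives the identity. The telescoping needs `g < ∞`, true since reachability probabilities of a
stochastic chain are at most `1`, and needs `g u = 0` to force `P(u,v) g(v) = 0`, which is the
abstraction inequality. -/

section Paths

variable {A B : Type*}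

theorem pathProb_cons_of_head?_eq_s10 (R : A → A → ℝ≥0∞) (x : A) {y : A} {m : List A}
    (h : m.head? = some y) : pathProb R (x :: m) = R x y * pathProb R m := by
  obtain ⟨t, rfl⟩ : ∃ t, m = y :: t := ⟨m.tail, List.eq_cons_of_mem_head? h⟩
  rfl

theorem pathProb_map_s10 (R : B → B → ℝ≥0∞) (f : A → B) :
    ∀ l : List A, pathProb R (l.map f) = pathProb (fun x y => R (f x) (f y)) l
  | [] | [_] => rfl
  | x :: y :: l => congrArg (R (f x) (f y) * ·) (pathProb_map_s10 R f (y :: l))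

theorem firstHitPath_map_iff {f : A → B} (hf : f.Injective) (U : Set B) (a : A)
    (l : List A) : FirstHitPath U (f a) (l.map f) ↔ FirstHitPath (f ⁻¹' U) a l := by
  simp [FirstHitPath, Fin.forall_iff, List.getLast_map, hf.eq_iff]

theorem FirstHitPath.head_eq {U : Set A} {s : A} {l : List A} (h : FirstHitPath U s l)
    (hl : l ≠ []) : l.head hl = s := by
  simpa [List.head?_eq_some_head hl] using h.1

theorem firstHitPath_singleton_s10 {U : Set A} {s : A} (hs : s ∈ U) : FirstHitPath U s [s] :=
  ⟨rfl, List.cons_ne_nil _ _, hs, fun i hi => absurd hi (by simp)⟩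

theorem FirstHitPath.eq_singleton_s10 {U : Set A} {s : A} {l : List A} (hs : s ∈ U)
    (h : FirstHitPath U s l) : l = [s] := by
  obtain ⟨t, rfl⟩ : ∃ t, l = s :: t := ⟨l.tail, List.eq_cons_of_mem_head? h.1⟩
  obtain ⟨-, -, -, hint⟩ := h
  cases t with
  | nil => rfl
  | cons _ _ => exact absurd hs (hint ⟨0, by simp⟩ (by simp))

theorem FirstHitPath.cons {U : Set A} {x y : A} {m : List A} (hx : x ∉ U)
    (h : FirstHitPath U y m) : FirstHitPath U x (x :: m) := by
  obtain ⟨-, hm, hlast, hint⟩ := h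
  refine ⟨rfl, List.cons_ne_nil _ _, by rwa [List.getLast_cons hm], ?_⟩
  rintro ⟨_ | j, hj⟩ hj'
  · exact hx
  · exact hint ⟨j, by simpa using hj⟩ (by simpa using hj')

theorem FirstHitPath.tail {U : Set A} {x : A} {l : List A} (hx : x ∉ U)
    (h : FirstHitPath U x l) : FirstHitPath U (l.tail.headD x) l.tail := by
  obtain ⟨t, rfl⟩ : ∃ t, l = x :: t := ⟨l.tail, List.eq_cons_of_mem_head? h.1⟩
  obtain ⟨-, _, hlast, hint⟩ := h
  cases t with
  | nil => exact absurd hlast hx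
  | cons y t =>
    rw [List.getLast_cons (List.cons_ne_nil _ _)] at hlast
    refine ⟨rfl, List.cons_ne_nil _ _, hlast, ?_⟩
    rintro ⟨j, hj⟩ hj'
    exact hint ⟨j + 1, by simpa using hj⟩ (by simpa using hj')

end Paths

section Reach

variable {A B : Type*}

theorem reachProb_of_mem_s10 (R : A → A → ℝ≥0∞) {U : Set A} {x : A} (hx : x ∈ U) :
    reachProb R U x = 1 := by
  rw [reachProb, tsum_eq_single ⟨[x], firstHitPath_singleton_s10 hx⟩
    fun l hl => absurd (Subtype.ext (l.2.eq_singleton_s10 hx)) hl]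
  rfl

theorem mul_reachProb_le (R : A → A → ℝ≥0∞) (U : Set A) {x : A} (y : A) (hx : x ∉ U) :
    R x y * reachProb R U y ≤ reachProb R U x := by
  let prepend : {m // FirstHitPath U y m} → {l // FirstHitPath U x l} :=
    fun m => ⟨x :: m.1, m.2.cons hx⟩
  have hprepend : prepend.Injective :=
    fun m m' h => Subtype.ext (List.cons_injective (congrArg Subtype.val h))
  rw [reachProb, reachProb, ← ENNReal.tsum_mul_left]
  refine le_of_eq_of_le (tsum_congr fun m => ?_)
    (ENNReal.tsum_comp_le_tsum_of_injective hprepend fun l => pathProb R l.1)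
  exact (pathProb_cons_of_head?_eq_s10 R x m.2.1).symm

theorem reachProb_ne_zero_of_apply_ne_zero {R : A → A → ℝ≥0∞} {U : Set A} {x y : A}
    (hxy : R x y ≠ 0) (hy : reachProb R U y ≠ 0) : reachProb R U x ≠ 0 := by
  by_cases hx : x ∈ U
  · simp [reachProb_of_mem_s10 R hx]
  · exact fun h => mul_ne_zero hxy hy (le_zero_iff.1 (h ▸ mul_reachProb_le R U y hx))

theorem forall_mem_of_pathProb_ne_zero (R : A → A → ℝ≥0∞) {p : A → Prop}
    (hp : ∀ x y, R x y ≠ 0 → p y → p x) :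
    ∀ (l : List A) (hl : l ≠ []), pathProb R l ≠ 0 → p (l.getLast hl) → ∀ x ∈ l, p x
  | [], hl, _, _ => absurd rfl hl
  | [a], _, _, ha => by simpa using ha
  | a :: b :: t, _, hne, hlast => by
    have htail := forall_mem_of_pathProb_ne_zero R hp (b :: t) (List.cons_ne_nil _ _)
      (right_ne_zero_of_mul hne) (by rwa [List.getLast_cons] at hlast)
    rintro x (_ | ⟨_, hx⟩)
    · exact hp _ _ (left_ne_zero_of_mul hne) (htail b List.mem_cons_self)
    · exact htail x hx

theorem reachProb_comap (R : B → B → ℝ≥0∞) {U : Set B} {f : A → B} (hf : f.Injective)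
    (hU : U ⊆ Set.range f) (hclosed : ∀ x y, R x y ≠ 0 → y ∈ Set.range f → x ∈ Set.range f)
    (a : A) : reachProb R U (f a) = reachProb (fun x y => R (f x) (f y)) (f ⁻¹' U) a := by
  let lift : {l // FirstHitPath (f ⁻¹' U) a l} → {l // FirstHitPath U (f a) l} :=
    fun l => ⟨l.1.map f, (firstHitPath_map_iff hf U a l.1).2 l.2⟩
  have hlift : lift.Injective :=
    fun l l' h => Subtype.ext (List.map_injective_iff.2 hf (congrArg Subtype.val h))
  have hsupport : Function.support (fun l : {l // FirstHitPath U (f a) l} => pathProb R l.1)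
      ⊆ Set.range lift := by
    intro l hl
    obtain ⟨-, hne, hlast, -⟩ := l.2
    obtain ⟨l₀, hl₀⟩ : l.1 ∈ Set.range (List.map f) := by
      rw [Set.range_list_map]
      exact forall_mem_of_pathProb_ne_zero R hclosed l.1 hne hl (hU hlast)
    exact ⟨⟨l₀, (firstHitPath_map_iff hf U a l₀).1 (hl₀ ▸ l.2)⟩, Subtype.ext hl₀⟩
  rw [reachProb, reachProb, ← hlift.tsum_eq hsupport]
  exact tsum_congr fun l => pathProb_map_s10 R f l.1

end Reach

section Bounded

variable {A : Type*}

noncomputable def boundedReachProb (R : A → A → ℝ≥0∞) (U : Set A) (n : ℕ) (x : A) : ℝ≥0∞ :=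
  ∑' l : {l // FirstHitPath U x l}, if l.1.length ≤ n then pathProb R l.1 else 0

theorem boundedReachProb_le_reachProb (R : A → A → ℝ≥0∞) (U : Set A) (n : ℕ) (x : A) :
    boundedReachProb R U n x ≤ reachProb R U x :=
  ENNReal.tsum_le_tsum fun _ => ite_le_sup _ _ _ |>.trans (by simp)

theorem boundedReachProb_le_one {R : A → A → ℝ≥0∞} (hR : IsStochastic R) (U : Set A) :
    ∀ n x, boundedReachProb R U n x ≤ 1
  | 0, x => by
    refine (ENNReal.tsum_eq_zero.2 fun l => if_neg ?_).trans_le zero_le_one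
    obtain ⟨-, hne, -⟩ := l.2
    simpa [List.length_eq_zero_iff] using hne
  | n + 1, x => by
    by_cases hx : x ∈ U
    · exact (boundedReachProb_le_reachProb R U _ x).trans (reachProb_of_mem_s10 R hx).le
    let split : {l // FirstHitPath U x l} → Σ y, {m // FirstHitPath U y m} :=
      fun l => ⟨_, ⟨l.1.tail, l.2.tail hx⟩⟩
    have hsplit : split.Injective := by
      intro l l' h
      have htail : l.1.tail = l'.1.tail := congrArg (fun p => p.2.1) h
      exact Subtype.ext (by
        rw [List.eq_cons_of_mem_head? l.2.1, List.eq_cons_of_mem_head? l'.2.1, htail])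
    calc boundedReachProb R U (n + 1) x
        = ∑' l, (fun p : Σ y, {m // FirstHitPath U y m} =>
            R x p.1 * if p.2.1.length ≤ n then pathProb R p.2.1 else 0) (split l) := by
          refine tsum_congr fun l => ?_
          conv_lhs => rw [List.eq_cons_of_mem_head? l.2.1]
          simp only [List.length_cons, Nat.add_le_add_iff_right,
            pathProb_cons_of_head?_eq_s10 R x (l.2.tail hx).1, mul_ite, mul_zero]
          rfl
      _ ≤ ∑' p : Σ y, {m // FirstHitPath U y m},
            R x p.1 * if p.2.1.length ≤ n then pathProb R p.2.1 else 0 :=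
          ENNReal.tsum_comp_le_tsum_of_injective hsplit _
      _ = ∑' y, R x y * boundedReachProb R U n y := by
          simp only [ENNReal.tsum_sigma', ENNReal.tsum_mul_left, boundedReachProb]
      _ ≤ ∑' y, R x y * 1 := by
          gcongr with y
          exact boundedReachProb_le_one hR U n y
      _ = 1 := by simpa using hR x

theorem reachProb_le_one {R : A → A → ℝ≥0∞} (hR : IsStochastic R) (U : Set A) (x : A) :
    reachProb R U x ≤ 1 := by
  rw [reachProb, ENNReal.tsum_eq_iSup_sum]
  refine iSup_le fun s => ?_
  let n := s.sup fun l => l.1.length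
  calc ∑ l ∈ s, pathProb R l.1
      = ∑ l ∈ s, if l.1.length ≤ n then pathProb R l.1 else 0 :=
        Finset.sum_congr rfl fun l hl =>
          (if_pos (Finset.le_sup (f := fun l => l.1.length) hl)).symm
    _ ≤ boundedReachProb R U n x := ENNReal.sum_le_tsum s
    _ ≤ 1 := boundedReachProb_le_one hR U n x

end Bounded

section Doob

variable {A : Type*} {R : A → A → ℝ≥0∞} {g : A → ℝ≥0∞}

noncomputable def doobTransform (R : A → A → ℝ≥0∞) (g : A → ℝ≥0∞) (x y : A) : ℝ≥0∞ :=
  R x y * g y / g x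

theorem mul_doobTransform (hfin : ∀ x, g x ≠ ∞)
    (hpos : ∀ x y, R x y ≠ 0 → g y ≠ 0 → g x ≠ 0) (x y : A) :
    g x * doobTransform R g x y = R x y * g y := by
  by_cases hx : g x = 0
  · have hxy : R x y * g y = 0 := by
      by_contra h
      exact hpos x y (left_ne_zero_of_mul h) (right_ne_zero_of_mul h) hx
    rw [hx, zero_mul, hxy]
  · exact ENNReal.mul_div_cancel hx (hfin x)

theorem pathProb_mul_doobTransform (hfin : ∀ x, g x ≠ ∞)
    (hpos : ∀ x y, R x y ≠ 0 → g y ≠ 0 → g x ≠ 0) :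
    ∀ (l : List A) (hl : l ≠ []),
      pathProb R l * g (l.getLast hl) = g (l.head hl) * pathProb (doobTransform R g) l
  | [], hl => absurd rfl hl
  | [a], _ => by simp [pathProb, mul_comm]
  | a :: b :: t, _ => by
    have ih := pathProb_mul_doobTransform hfin hpos (b :: t) (List.cons_ne_nil _ _)
    rw [List.head_cons] at ih
    calc R a b * pathProb R (b :: t) * g ((a :: b :: t).getLast _)
        = R a b * g b * pathProb (doobTransform R g) (b :: t) := by
          rw [List.getLast_cons (List.cons_ne_nil _ _), mul_assoc, ih, mul_assoc]
      _ = g a * (doobTransform R g a b * pathProb (doobTransform R g) (b :: t)) := by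
          rw [← mul_doobTransform hfin hpos, mul_assoc]

theorem reachProb_eq_mul_reachProb_doobTransform (hfin : ∀ x, g x ≠ ∞)
    (hpos : ∀ x y, R x y ≠ 0 → g y ≠ 0 → g x ≠ 0) {U : Set A} (hU : ∀ x ∈ U, g x = 1)
    (a : A) : reachProb R U a = g a * reachProb (doobTransform R g) U a := by
  rw [reachProb, reachProb, ← ENNReal.tsum_mul_left]
  refine tsum_congr fun l => ?_
  obtain ⟨-, hl, hlast, -⟩ := l.2
  simpa [hU _ hlast, l.2.head_eq hl] using pathProb_mul_doobTransform hfin hpos l.1 hl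

end Doob

theorem reachProb_eq_mul_reachProb_biasedKernel {S : Type*} (P : S → S → ℝ≥0∞) (F : Set S)
    {S' : Type*} (P' : S' → S' → ℝ≥0∞) (hP' : IsStochastic P') (F' : Set S')
    (α : SA P F → S') (habs : IsAbstraction P F P' F' α) {T : Set S} (hTF : T ⊆ F)
    (s : SA P F) :
    reachProb P T s.val =
      reachProb P' F' (α s) *
        reachProb (biasedKernel P F P' F' α)
          {x : Option (SA P F) | ∃ u : SA P F, x = some u ∧ u.val ∈ T} (some s) := by
  let g : SA P F → ℝ≥0∞ := fun u => reachProb P' F' (α u)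
  have hF : ∀ u : SA P F, u.val ∈ F → g u = 1 := fun u hu => reachProb_of_mem_s10 P' (habs.1 u hu)
  have hfin : ∀ u, g u ≠ ∞ :=
    fun u => ((reachProb_le_one hP' F' (α u)).trans_lt ENNReal.one_lt_top).ne
  have hpos : ∀ u v : SA P F, P u v ≠ 0 → g v ≠ 0 → g u ≠ 0 := by
    intro u v huv hv
    by_cases hu : u.val ∈ F
    · simp [hF u hu]
    · refine fun h => mul_ne_zero huv hv (le_zero_iff.1 ?_)
      calc P u v * g v ≤ ∑' w : SA P F, P u w * g w := ENNReal.le_tsum v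
        _ ≤ g u := habs.2 u hu
        _ = 0 := h
  have hlift : reachProb P T s.val =
      reachProb (fun u v : SA P F => P u v) (Subtype.val ⁻¹' T) s := by
    refine reachProb_comap P Subtype.val_injective (fun x hx => ⟨⟨x, ?_⟩, rfl⟩) ?_ s
    · simp [Av, reachProb_of_mem_s10 P (hTF hx)]
    · rintro x _ hxy ⟨y, rfl⟩
      exact ⟨⟨x, reachProb_ne_zero_of_apply_ne_zero hxy y.2⟩, rfl⟩
  have hbiased : reachProb (biasedKernel P F P' F' α)
      {x : Option (SA P F) | ∃ u : SA P F, x = some u ∧ u.val ∈ T} (some s) =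
      reachProb (doobTransform (fun u v : SA P F => P u v) g) (Subtype.val ⁻¹' T) s := by
    refine (reachProb_comap _ (Option.some_injective _) ?_ ?_ s).trans ?_
    · rintro _ ⟨u, rfl, -⟩
      exact ⟨u, rfl⟩
    · rintro (_ | x) _ hxy ⟨y, rfl⟩
      · exact absurd rfl hxy
      · exact ⟨x, rfl⟩
    · congr 1
      ext u
      exact ⟨fun ⟨_, hu, huT⟩ => Option.some_injective _ hu ▸ huT, fun hu => ⟨u, rfl, hu⟩⟩
  rw [hlift, hbiased]
  exact reachProb_eq_mul_reachProb_doobTransform hfin hpos (fun u hu => hF u (hTF hu)) s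

open scoped Classical

section Thms

variable {S : Type*}

theorem stmt10_general (P : S → S → ℝ≥0∞)
    (F : Set S) {S' : Type*}
    (P' : S' → S' → ℝ≥0∞) (hP' : IsStochastic P') (F' : Set S')
    (α : SA P F → S') (habs : IsAbstraction P F P' F' α)
    (T : Set S) (hTF : T ⊆ F) :
    ∀ s : SA P F,
      reachProb P T s.val =
        reachProb P' F' (α s) *
          reachProb (biasedKernel P F P' F' α)
            {x : Option (SA P F) | ∃ u : SA P F, x = some u ∧ u.val ∈ T}
            (some s) ∧
      reachProb P F s.val =
        reachProb P' F' (α s) *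
          reachProb (biasedKernel P F P' F' α)
            {x : Option (SA P F) | ∃ u : SA P F, x = some u ∧ u.val ∈ F}
            (some s) :=
  fun s => ⟨reachProb_eq_mul_reachProb_biasedKernel P F P' hP' F' α habs hTF s,
    reachProb_eq_mul_reachProb_biasedKernel P F P' hP' F' α habs subset_rfl s⟩

theorem stmt10 [Countable S] (P : S → S → ℝ≥0∞) (hP : IsStochastic P)
    (F : Set S) {S' : Type*} [Countable S']
    (P' : S' → S' → ℝ≥0∞) (hP' : IsStochastic P') (F' : Set S')
    (α : SA P F → S') (habs : IsAbstraction P F P' F' α)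
    (T : Set S) (hTF : T ⊆ F) (habsT : ∀ s ∈ T, P s s = 1) :
    ∀ s : SA P F,
      reachProb P T s.val =
        reachProb P' F' (α s) *
          reachProb (biasedKernel P F P' F' α)
            {x : Option (SA P F) | ∃ u : SA P F, x = some u ∧ u.val ∈ T}
            (some s) ∧
      reachProb P F s.val =
        reachProb P' F' (α s) *
          reachProb (biasedKernel P F P' F' α)
            {x : Option (SA P F) | ∃ u : SA P F, x = some u ∧ u.val ∈ F}
            (some s) :=
  stmt10_general P F P' hP' F' α habs T hTF

end Thms
end
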